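/- Under the stochastic PBM environment, the expected regret satisfies R(T) ≥ (1/2) ∑_{t=1}^T ∑_{i=1}^n ∑_{j=1}^m Δ_{i,j} · E[x_{t,i,j}], where Δ_{i,j} is the PBM suboptimality gap defined by Δ_{i,j} = (β_j − β_{j+1})(α_j − α_i) for j < i, 0 for i = j, and (β_{j−1} − β_j)(α_i − α_j) for j > i. -/

import Mathlib

/-!
For a placement `σ` of items on positions `1, …, m`, put
`D k = prefixDeficit α σ k = ∑_{j ≤ k} (α j - α (σ j))`.
Abel summation rewrites the regret of `σ` as `∑_k (β k - β (k + 1)) D k`, and every `D k` is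
nonnegative because, `α` being decreasing, no `k` items are better than the top `k`.
An item `i = σ j` shown too high (`j < i`) has gap `(β j - β (j + 1)) (α j - α i)`, at most the
`k = j` term since `D (j - 1) ≥ 0`; one shown too low (`i < j`) has gap at most the `k = j - 1` term
since `D j ≥ 0`. Each term is charged at most twice, so the total gap is at most twice the regret,
pointwise and hence in expectation.
-/

open Finset MeasureTheory

section Rearrangement

variable {R : Type*} [AddCommGroup R] [LinearOrder R] [IsOrderedAddMonoid R]

theorem sum_le_sum_Icc_card_of_antitoneOn {f : ℕ → R} {n : ℕ} (hf : AntitoneOn f (Icc 1 n))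
    {A : Finset ℕ} (hA : A ⊆ Icc 1 n) : ∑ a ∈ A, f a ≤ ∑ l ∈ Icc 1 #A, f l := by
  set k := #A
  obtain hk | hk := Nat.eq_zero_or_pos k
  · simp [card_eq_zero.1 hk, hk]
  have hkn : k ≤ n := by simpa using card_le_card hA
  have hk_mem : k ∈ Icc 1 n := mem_Icc.2 ⟨hk, hkn⟩
  have hfar : ∀ a ∈ A \ Icc 1 k, f a ≤ f k := fun a ha => by
    rw [mem_sdiff, mem_Icc] at ha
    have ha_pos := (mem_Icc.1 (hA ha.1)).1
    exact hf hk_mem (hA ha.1) (by omega)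
  have hnear : ∀ l ∈ Icc 1 k \ A, f k ≤ f l := fun l hl => by
    rw [mem_sdiff, mem_Icc] at hl
    exact hf (mem_Icc.2 ⟨hl.1.1, hl.1.2.trans hkn⟩) hk_mem hl.1.2
  have hcard : #(A \ Icc 1 k) = #(Icc 1 k \ A) := card_sdiff_comm (by simp [k])
  rw [← sub_nonneg, ← sum_sdiff_sub_sum_sdiff, sub_nonneg]
  calc ∑ a ∈ A \ Icc 1 k, f a ≤ #(A \ Icc 1 k) • f k := sum_le_card_nsmul _ _ _ hfar
    _ = #(Icc 1 k \ A) • f k := by rw [hcard]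
    _ ≤ ∑ l ∈ Icc 1 k \ A, f l := card_nsmul_le_sum _ _ _ hnear

theorem sum_Icc_comp_le_sum_Icc_of_antitoneOn {f : ℕ → R} {n k : ℕ}
    (hf : AntitoneOn f (Icc 1 n)) {σ : ℕ → ℕ} (hσ : Set.MapsTo σ (Icc 1 k) (Icc 1 n))
    (hinj : Set.InjOn σ (Icc 1 k)) :
    ∑ j ∈ Icc 1 k, f (σ j) ≤ ∑ j ∈ Icc 1 k, f j := by
  have := sum_le_sum_Icc_card_of_antitoneOn hf (A := (Icc 1 k).image σ)
    (image_subset_iff.2 fun j hj => hσ hj)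
  rwa [sum_image hinj, card_image_of_injOn hinj, Nat.card_Icc, Nat.add_sub_cancel] at this

end Rearrangement

theorem sum_Icc_mul_eq_sum_Icc_sub_mul_partialSum {R : Type*} [CommRing R] (x β : ℕ → R)
    (m : ℕ) : ∑ j ∈ Icc 1 m, x j * β j =
      ∑ k ∈ Icc 1 m, (β k - β (k + 1)) * ∑ j ∈ Icc 1 k, x j + β (m + 1) * ∑ j ∈ Icc 1 m, x j := by
  induction m with
  | zero => simp
  | succ m ih =>
    simp only [sum_Icc_succ_top (show 1 ≤ m + 1 by omega), ih]
    ring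

theorem sum_Icc_sub_one_add_eq_sum_Icc {M : Type*} [AddCommMonoid M] {g : ℕ → M} (hg : g 0 = 0)
    (m : ℕ) : ∑ j ∈ Icc 1 m, g (j - 1) + g m = ∑ j ∈ Icc 1 m, g j := by
  induction m with
  | zero => simp [hg]
  | succ m ih =>
    rw [sum_Icc_succ_top (by omega), sum_Icc_succ_top (by omega), ← ih, Nat.add_sub_cancel]

def pbmGap (α β : ℕ → ℝ) (i j : ℕ) : ℝ :=
  if j < i then (β j - β (j + 1)) * (α j - α i)
  else if j = i then 0
  else (β (j - 1) - β j) * (α i - α j)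

def prefixDeficit (α : ℕ → ℝ) (σ : ℕ → ℕ) (k : ℕ) : ℝ :=
  ∑ j ∈ Icc 1 k, (α j - α (σ j))

section Placement

variable {α β : ℕ → ℝ} {n m : ℕ} {σ : ℕ → ℕ}

@[simp]
theorem prefixDeficit_zero : prefixDeficit α σ 0 = 0 := by
  simp [prefixDeficit]

theorem prefixDeficit_eq_sub_one_add {j : ℕ} (hj : 1 ≤ j) :
    prefixDeficit α σ j = prefixDeficit α σ (j - 1) + (α j - α (σ j)) := by
  obtain ⟨k, rfl⟩ := Nat.exists_eq_add_of_le' hj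
  simp only [prefixDeficit, sum_Icc_succ_top (show 1 ≤ k + 1 by omega), Nat.add_sub_cancel]

theorem prefixDeficit_nonneg (hα : AntitoneOn α (Icc 1 n))
    (hσ : Set.MapsTo σ (Icc 1 m) (Icc 1 n)) (hinj : Set.InjOn σ (Icc 1 m)) {k : ℕ} (hk : k ≤ m) :
    0 ≤ prefixDeficit α σ k := by
  have hsub : (Icc 1 k : Set ℕ) ⊆ Icc 1 m := by
    intro j hj
    simp only [coe_Icc, Set.mem_Icc] at hj ⊢
    omega
  rw [prefixDeficit, sum_sub_distrib, sub_nonneg]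
  exact sum_Icc_comp_le_sum_Icc_of_antitoneOn hα (hσ.mono_left hsub) (hinj.mono hsub)

theorem sum_sub_mul_eq_sum_sub_mul_prefixDeficit (hβ : β (m + 1) = 0) :
    ∑ j ∈ Icc 1 m, (α j * β j - α (σ j) * β j) =
      ∑ k ∈ Icc 1 m, (β k - β (k + 1)) * prefixDeficit α σ k := by
  simp only [← sub_mul]
  rw [sum_Icc_mul_eq_sum_Icc_sub_mul_partialSum, hβ, zero_mul, add_zero]
  rfl

theorem sub_mul_prefixDeficit_nonneg (hβ : AntitoneOn β (Icc 1 (m + 1)))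
    (hD : ∀ k ≤ m, 0 ≤ prefixDeficit α σ k) {k : ℕ} (hk : k ≤ m) :
    0 ≤ (β k - β (k + 1)) * prefixDeficit α σ k := by
  obtain rfl | hk_pos := Nat.eq_zero_or_pos k
  · simp
  exact mul_nonneg (sub_nonneg.2 (hβ (by simp; omega) (by simp; omega) (by omega))) (hD k hk)

theorem pbmGap_le (hβ : AntitoneOn β (Icc 1 (m + 1))) (hD : ∀ k ≤ m, 0 ≤ prefixDeficit α σ k)
    {j : ℕ} (hj : j ∈ Icc 1 m) (hσj : 1 ≤ σ j) :
    pbmGap α β (σ j) j ≤ (β j - β (j + 1)) * prefixDeficit α σ j +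
      (β (j - 1) - β j) * prefixDeficit α σ (j - 1) := by
  obtain ⟨hj_pos, hjm⟩ := mem_Icc.1 hj
  have hdrop : ∀ k, 1 ≤ k → k ≤ m → 0 ≤ β k - β (k + 1) := fun k hk hkm =>
    sub_nonneg.2 (hβ (by simp; omega) (by simp; omega) (by omega))
  have hcur := sub_mul_prefixDeficit_nonneg hβ hD hjm
  have hprev := sub_mul_prefixDeficit_nonneg hβ hD (k := j - 1) (by omega)
  rw [Nat.sub_add_cancel hj_pos] at hprev
  have hsplit := prefixDeficit_eq_sub_one_add (α := α) (σ := σ) hj_pos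
  unfold pbmGap
  split_ifs
  · have := mul_le_mul_of_nonneg_left (a := β j - β (j + 1))
      (show α j - α (σ j) ≤ prefixDeficit α σ j by linarith [hD (j - 1) (by omega)])
      (hdrop j hj_pos hjm)
    linarith
  · linarith
  · have hdrop' := hdrop (j - 1) (by omega) (by omega)
    rw [Nat.sub_add_cancel hj_pos] at hdrop'
    have := mul_le_mul_of_nonneg_left
      (show α (σ j) - α j ≤ prefixDeficit α σ (j - 1) by linarith [hD j hjm]) hdrop'
    linarith

theorem sum_pbmGap_le_two_mul_sum_sub_mul (hα : AntitoneOn α (Icc 1 n))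
    (hβ : AntitoneOn β (Icc 1 (m + 1))) (hβ_last : β (m + 1) = 0)
    (hσ : Set.MapsTo σ (Icc 1 m) (Icc 1 n)) (hinj : Set.InjOn σ (Icc 1 m)) :
    ∑ j ∈ Icc 1 m, pbmGap α β (σ j) j ≤ 2 * ∑ j ∈ Icc 1 m, (α j * β j - α (σ j) * β j) := by
  have hD : ∀ k ≤ m, 0 ≤ prefixDeficit α σ k := fun k => prefixDeficit_nonneg hα hσ hinj
  set g : ℕ → ℝ := fun k => (β k - β (k + 1)) * prefixDeficit α σ k
  have hg_zero : g 0 = 0 := by simp [g]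
  calc ∑ j ∈ Icc 1 m, pbmGap α β (σ j) j ≤ ∑ j ∈ Icc 1 m, (g j + g (j - 1)) :=
        sum_le_sum fun j hj => by
          simpa only [g, Nat.sub_add_cancel (mem_Icc.1 hj).1] using
            pbmGap_le hβ hD hj (mem_Icc.1 (hσ hj)).1
    _ = 2 * ∑ j ∈ Icc 1 m, g j - g m := by
        rw [sum_add_distrib, ← sum_Icc_sub_one_add_eq_sum_Icc hg_zero m]
        ring
    _ ≤ 2 * ∑ j ∈ Icc 1 m, g j := by linarith [sub_mul_prefixDeficit_nonneg hβ hD le_rfl]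
    _ = 2 * ∑ j ∈ Icc 1 m, (α j * β j - α (σ j) * β j) := by
        rw [sum_sub_mul_eq_sum_sub_mul_prefixDeficit hβ_last]

end Placement

theorem apply_eq_sum_indicator_of_mem {Ω ι M : Type*} [AddCommMonoid M] {X : Ω → ι}
    {S : Finset ι} {ω : Ω} (hω : X ω ∈ S) (g : ι → M) :
    g (X ω) = ∑ i ∈ S, {ω' | X ω' = i}.indicator (fun _ => g i) ω := by
  rw [sum_eq_single_of_mem (X ω) hω fun i _ hi =>
    Set.indicator_of_notMem (fun h => hi h.symm) _]
  exact (Set.indicator_of_mem rfl _).symm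

section Expectation

variable {Ω ι E : Type*} [MeasurableSpace Ω] {μ : Measure Ω} [IsFiniteMeasure μ]
  [MeasurableSpace ι] [MeasurableSingletonClass ι] [NormedAddCommGroup E] {X : Ω → ι}
  {S : Finset ι}

theorem integrable_comp_of_forall_mem (hX : Measurable X) (hS : ∀ ω, X ω ∈ S) (g : ι → E) :
    Integrable (fun ω => g (X ω)) μ := by
  have hlevel (i : ι) : MeasurableSet {ω | X ω = i} := hX (measurableSet_singleton i)
  simp_rw [apply_eq_sum_indicator_of_mem (hS _) g]
  exact integrable_finsetSum _ fun i _ => (integrable_const (g i)).indicator (hlevel i)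

theorem integral_comp_eq_sum_of_forall_mem [NormedSpace ℝ E] [CompleteSpace E]
    (hX : Measurable X) (hS : ∀ ω, X ω ∈ S) (g : ι → E) :
    ∫ ω, g (X ω) ∂μ = ∑ i ∈ S, μ.real {ω | X ω = i} • g i := by
  have hlevel (i : ι) : MeasurableSet {ω | X ω = i} := hX (measurableSet_singleton i)
  simp_rw [apply_eq_sum_indicator_of_mem (hS _) g]
  rw [integral_finsetSum _ fun i _ => (integrable_const (g i)).indicator (hlevel i)]
  exact sum_congr rfl fun i _ => integral_indicator_const _ (hlevel i)

end Expectation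

theorem sum_pbmGap_mul_measureReal_le_two_mul_integral {Ω : Type*} [MeasurableSpace Ω]
    {μ : Measure Ω} [IsFiniteMeasure μ] {α β : ℕ → ℝ} {n m : ℕ} (hα : AntitoneOn α (Icc 1 n))
    (hβ : AntitoneOn β (Icc 1 (m + 1))) (hβ_last : β (m + 1) = 0) {σ : Ω → ℕ → ℕ}
    (hmeas : ∀ j, Measurable fun ω => σ ω j) (hσ : ∀ ω, Set.MapsTo (σ ω) (Icc 1 m) (Icc 1 n))
    (hinj : ∀ ω, Set.InjOn (σ ω) (Icc 1 m)) :
    ∑ i ∈ Icc 1 n, ∑ j ∈ Icc 1 m, pbmGap α β i j * μ.real {ω | σ ω j = i} ≤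
      2 * ∫ ω, ∑ j ∈ Icc 1 m, (α j * β j - α (σ ω j) * β j) ∂μ := by
  have hint (j : ℕ) (hj : j ∈ Icc 1 m) (g : ℕ → ℝ) : Integrable (fun ω => g (σ ω j)) μ :=
    integrable_comp_of_forall_mem (hmeas j) (fun ω => hσ ω hj) g
  have hint_gap := integrable_finsetSum (μ := μ) (Icc 1 m) fun j hj =>
    hint j hj fun i => pbmGap α β i j
  have hint_regret := integrable_finsetSum (μ := μ) (Icc 1 m) fun j hj =>
    hint j hj fun i => α j * β j - α i * β j
  calc ∑ i ∈ Icc 1 n, ∑ j ∈ Icc 1 m, pbmGap α β i j * μ.real {ω | σ ω j = i}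
      = ∑ j ∈ Icc 1 m, ∫ ω, pbmGap α β (σ ω j) j ∂μ := by
        rw [sum_comm]
        refine sum_congr rfl fun j hj => ?_
        rw [integral_comp_eq_sum_of_forall_mem (hmeas j) (fun ω => hσ ω hj)
          fun i => pbmGap α β i j]
        simp only [smul_eq_mul, mul_comm]
    _ = ∫ ω, ∑ j ∈ Icc 1 m, pbmGap α β (σ ω j) j ∂μ :=
        (integral_finsetSum _ fun j hj => hint j hj fun i => pbmGap α β i j).symm
    _ ≤ ∫ ω, 2 * ∑ j ∈ Icc 1 m, (α j * β j - α (σ ω j) * β j) ∂μ :=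
        integral_mono hint_gap (hint_regret.const_mul 2) fun ω =>
          sum_pbmGap_le_two_mul_sum_sub_mul hα hβ hβ_last (hσ ω) (hinj ω)
    _ = 2 * ∫ ω, ∑ j ∈ Icc 1 m, (α j * β j - α (σ ω j) * β j) ∂μ := integral_const_mul _ _

theorem pbm_regret_self_bounding_general
    {Ω : Type*} [MeasurableSpace Ω] (μ : Measure Ω) [IsProbabilityMeasure μ]
    (n m T : ℕ)
    (α β : ℕ → ℝ)
    (hαstrict : ∀ i, 1 ≤ i → i ≤ m → α i > α (i + 1))
    (hαmono : ∀ i, m + 1 ≤ i → i < n → α i ≥ α (i + 1))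
    (hβstrict : ∀ j, 1 ≤ j → j ≤ m → β j > β (j + 1))
    (hβlast : β (m + 1) = 0)
    (Δ : ℕ → ℕ → ℝ)
    (hΔ : ∀ i j, Δ i j =
      if j < i then (β j - β (j + 1)) * (α j - α i)
      else if j = i then 0
      else (β (j - 1) - β j) * (α i - α j))
    (I : ℕ → ℕ → Ω → ℕ)
    (hImeas : ∀ t j, Measurable (I t j))
    (hIrange : ∀ t ω, ∀ j ∈ Finset.Icc 1 m, I t j ω ∈ Finset.Icc 1 n)
    (hIinj : ∀ t ω, Set.InjOn (fun j => I t j ω) (Finset.Icc 1 m)) :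
    ∑ t ∈ Finset.Icc 1 T,
        ∫ ω, (∑ j ∈ Finset.Icc 1 m, (α j * β j - α (I t j ω) * β j)) ∂μ
      ≥ (1 / 2) * ∑ t ∈ Finset.Icc 1 T, ∑ i ∈ Finset.Icc 1 n,
          ∑ j ∈ Finset.Icc 1 m, Δ i j * (μ {ω | I t j ω = i}).toReal := by
  have hα : AntitoneOn α (Icc 1 n) := by
    rw [coe_Icc]
    refine antitoneOn_of_add_one_le Set.ordConnected_Icc fun a _ ha ha' => ?_
    rcases le_or_gt a m with ham | ham
    · exact (hαstrict a ha.1 ham).le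
    · exact hαmono a ham (by simp only [Set.mem_Icc] at ha'; omega)
  have hβ : AntitoneOn β (Icc 1 (m + 1)) := by
    rw [coe_Icc]
    exact antitoneOn_of_add_one_le Set.ordConnected_Icc fun a _ ha ha' =>
      (hβstrict a ha.1 (by simp only [Set.mem_Icc] at ha'; omega)).le
  obtain rfl : Δ = pbmGap α β := funext₂ hΔ
  rw [ge_iff_le, mul_sum]
  refine sum_le_sum fun t _ => ?_
  have := sum_pbmGap_mul_measureReal_le_two_mul_integral (μ := μ) hα hβ hβlast
    (σ := fun ω j => I t j ω) (hImeas t) (fun ω j hj => hIrange t ω j hj) (hIinj t)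
  simp only [Measure.real] at this
  linarith

/-- Self-bounding constraint for the regret in the stochastic PBM environment:
`R(T) ≥ (1/2) ∑_t ∑_i ∑_j Δ_{i,j} E[x_{t,i,j}]`, where `I t j ω` is the item
placed at position `j` in round `t` and `x_{t,i,j} = P(I t j = i)`. -/
theorem pbm_regret_self_bounding
    {Ω : Type*} [MeasurableSpace Ω] (μ : Measure Ω) [IsProbabilityMeasure μ]
    (n m T : ℕ) (hm : 1 ≤ m) (hmn : m ≤ n)
    (α β : ℕ → ℝ)
    (hα01 : ∀ i ∈ Finset.Icc 1 n, α i ∈ Set.Icc (0:ℝ) 1)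
    (hαstrict : ∀ i, 1 ≤ i → i ≤ m → α i > α (i + 1))
    (hαmono : ∀ i, m + 1 ≤ i → i < n → α i ≥ α (i + 1))
    (hβpos : ∀ j ∈ Finset.Icc 1 m, 0 < β j ∧ β j ≤ 1)
    (hβstrict : ∀ j, 1 ≤ j → j ≤ m → β j > β (j + 1))
    (hβlast : β (m + 1) = 0)
    (Δ : ℕ → ℕ → ℝ)
    (hΔ : ∀ i j, Δ i j =
      if j < i then (β j - β (j + 1)) * (α j - α i)
      else if j = i then 0
      else (β (j - 1) - β j) * (α i - α j))
    (I : ℕ → ℕ → Ω → ℕ)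
    (hImeas : ∀ t j, Measurable (I t j))
    (hIrange : ∀ t ω, ∀ j ∈ Finset.Icc 1 m, I t j ω ∈ Finset.Icc 1 n)
    (hIinj : ∀ t ω, Set.InjOn (fun j => I t j ω) (Finset.Icc 1 m)) :
    ∑ t ∈ Finset.Icc 1 T,
        ∫ ω, (∑ j ∈ Finset.Icc 1 m, (α j * β j - α (I t j ω) * β j)) ∂μ
      ≥ (1 / 2) * ∑ t ∈ Finset.Icc 1 T, ∑ i ∈ Finset.Icc 1 n,
          ∑ j ∈ Finset.Icc 1 m, Δ i j * (μ {ω | I t j ω = i}).toReal :=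
  pbm_regret_self_bounding_general μ n m T α β hαstrict hαmono hβstrict hβlast Δ hΔ I hImeas hIrange
    hIinj
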